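/- arXiv:1102.3614 — 3 statements merged into one kernel-verified Lean document; each statement's English description precedes it below -/
import Mathlib

section
/- For every v ∈ ℝ^d and every symmetric trace-free real d×d matrix u, one has (1/2)|v|² ≤ e(v,u), with equality if and only if u = v ⊗ v − (|v|²/d)·I_d, where I_d is the d×d identity matrix. In particular e(v,u) ≥ 0. -/
open scoped BigOperators

/-!
For symmetric `M`, the matrix `λ_max(M) • 1 - M` is positive semidefinite, so its trace
`d · λ_max(M) - tr M` is nonnegative and vanishes only when `M = λ_max(M) • 1`. For
`M = v ⊗ v - u` with `u` trace-free, `tr M = |v|²`, which gives both the inequality and its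
equality case.
-/

/-- The largest eigenvalue of a symmetric matrix `M`, defined as the supremum of
`xᵀ M x` over unit vectors `x ∈ ℝ^d`. -/
noncomputable def lambdaMax {d : ℕ} (M : Matrix (Fin d) (Fin d) ℝ) : ℝ :=
  sSup {r : ℝ | ∃ x : EuclideanSpace ℝ (Fin d), ‖x‖ = 1 ∧ r = ∑ i, ∑ j, x i * M i j * x j}

/-- The generalised energy `e(v,u) = (d/2)·λ_max(v ⊗ v − u)`. -/
noncomputable def genE {d : ℕ} (v : EuclideanSpace ℝ (Fin d))
    (u : Matrix (Fin d) (Fin d) ℝ) : ℝ :=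
  (d : ℝ) / 2 * lambdaMax (Matrix.of fun i j => v i * v j - u i j)

open Matrix

lemma sum_sum_mul_mul_eq_dotProduct_mulVec {n R : Type*} [Fintype n] [NonUnitalSemiring R]
    (M : Matrix n n R) (x : n → R) :
    ∑ i, ∑ j, x i * M i j * x j = x ⬝ᵥ (M *ᵥ x) := by
  simp only [dotProduct, mulVec, Finset.mul_sum, mul_assoc]

lemma dotProduct_ofLp_self {n : Type*} [Fintype n] (x : EuclideanSpace ℝ n) :
    x.ofLp ⬝ᵥ x.ofLp = ‖x‖ ^ 2 := by
  rw [EuclideanSpace.norm_sq_eq]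
  simp [dotProduct, sq]

section lambdaMax

variable {d : ℕ}

lemma bddAbove_quadForm_sphere (M : Matrix (Fin d) (Fin d) ℝ) :
    BddAbove {r : ℝ | ∃ x : EuclideanSpace ℝ (Fin d), ‖x‖ = 1 ∧
      r = ∑ i, ∑ j, x i * M i j * x j} := by
  refine ((isCompact_sphere (0 : EuclideanSpace ℝ (Fin d)) 1).bddAbove_image
    (f := fun x => ∑ i, ∑ j, x i * M i j * x j) (by fun_prop)).mono ?_
  rintro r ⟨x, hx, rfl⟩
  exact ⟨x, by simpa using hx, rfl⟩

lemma dotProduct_mulVec_le_lambdaMax (M : Matrix (Fin d) (Fin d) ℝ) {x : Fin d → ℝ}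
    (hx : ‖WithLp.toLp 2 x‖ = 1) : x ⬝ᵥ (M *ᵥ x) ≤ lambdaMax M :=
  le_csSup (bddAbove_quadForm_sphere M) ⟨_, hx, (sum_sum_mul_mul_eq_dotProduct_mulVec M x).symm⟩

lemma dotProduct_mulVec_le_lambdaMax_mul (M : Matrix (Fin d) (Fin d) ℝ) (x : Fin d → ℝ) :
    x ⬝ᵥ (M *ᵥ x) ≤ lambdaMax M * (x ⬝ᵥ x) := by
  set c := ‖WithLp.toLp 2 x‖
  have hxx : x ⬝ᵥ x = c ^ 2 := dotProduct_ofLp_self (WithLp.toLp 2 x)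
  rcases eq_or_ne c 0 with hc | hc
  · obtain rfl : x = 0 := by simpa [c] using hc
    simp
  have hx : x = c • (c⁻¹ • x) := by rw [smul_inv_smul₀ hc]
  have h := dotProduct_mulVec_le_lambdaMax M (x := c⁻¹ • x) (by simp [c, norm_smul, hc])
  rw [hxx, hx, mulVec_smul, dotProduct_smul, smul_dotProduct, smul_eq_mul, smul_eq_mul]
  nlinarith [sq_nonneg c]

lemma posSemidef_lambdaMax_smul_one_sub {M : Matrix (Fin d) (Fin d) ℝ} (hM : M.IsSymm) :
    (lambdaMax M • 1 - M).PosSemidef := by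
  refine .of_dotProduct_mulVec_nonneg ?_ fun x => ?_
  · simpa [isHermitian_iff_isSymm] using (isSymm_one.smul _).sub hM
  · simpa [sub_mulVec, dotProduct_sub, smul_mulVec] using dotProduct_mulVec_le_lambdaMax_mul M x

lemma lambdaMax_smul_one (hd : 0 < d) (c : ℝ) :
    lambdaMax (c • 1 : Matrix (Fin d) (Fin d) ℝ) = c := by
  have hS : {r : ℝ | ∃ x : EuclideanSpace ℝ (Fin d), ‖x‖ = 1 ∧
      r = ∑ i, ∑ j, x i * (c • 1 : Matrix (Fin d) (Fin d) ℝ) i j * x j} = {c} := by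
    ext r
    simp only [Set.mem_ofPred_eq, Set.mem_singleton_iff, sum_sum_mul_mul_eq_dotProduct_mulVec,
      smul_mulVec, one_mulVec, dotProduct_smul, smul_eq_mul]
    constructor
    · rintro ⟨x, hx, rfl⟩
      rw [dotProduct_ofLp_self, hx, one_pow, mul_one]
    · rintro rfl
      exact ⟨EuclideanSpace.single ⟨0, hd⟩ 1, by simp, by simp⟩
  rw [lambdaMax, hS, csSup_singleton]

lemma trace_le_mul_lambdaMax {M : Matrix (Fin d) (Fin d) ℝ} (hM : M.IsSymm) :
    M.trace ≤ d * lambdaMax M := by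
  have := (posSemidef_lambdaMax_smul_one_sub hM).trace_nonneg
  simp only [trace_sub, trace_smul, trace_one, Fintype.card_fin, smul_eq_mul] at this
  linarith

lemma mul_lambdaMax_eq_trace_iff (hd : 0 < d) {M : Matrix (Fin d) (Fin d) ℝ} (hM : M.IsSymm) :
    d * lambdaMax M = M.trace ↔ M = (M.trace / d) • 1 := by
  have hd' : (d : ℝ) ≠ 0 := by positivity
  constructor
  · intro h
    have h0 : lambdaMax M • 1 - M = 0 :=
      (posSemidef_lambdaMax_smul_one_sub hM).trace_eq_zero_iff.mp <| by
        simp only [trace_sub, trace_smul, trace_one, Fintype.card_fin, smul_eq_mul]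
        linarith
    rw [← h, mul_div_cancel_left₀ _ hd', ← sub_eq_zero, ← neg_eq_zero, neg_sub, h0]
  · intro h
    conv_lhs => rw [h, lambdaMax_smul_one hd]
    field_simp

end lambdaMax

/-- For every `v ∈ ℝ^d` and every symmetric trace-free `u`, one has
`(1/2)|v|² ≤ e(v,u)`, with equality iff `u = v ⊗ v − (|v|²/d)·I_d`; in particular
`e(v,u) ≥ 0`. -/
theorem half_normSq_le_genE {d : ℕ} (hd : 0 < d) (v : EuclideanSpace ℝ (Fin d))
    (u : Matrix (Fin d) (Fin d) ℝ) (hsymm : u.IsSymm) (htrace : u.trace = 0) :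
    (1 / 2 : ℝ) * ‖v‖ ^ 2 ≤ genE v u ∧
    ((1 / 2 : ℝ) * ‖v‖ ^ 2 = genE v u ↔
      u = Matrix.of fun i j => v i * v j - ‖v‖ ^ 2 / d * (1 : Matrix (Fin d) (Fin d) ℝ) i j) ∧
    0 ≤ genE v u := by
  set M : Matrix (Fin d) (Fin d) ℝ := vecMulVec v v - u
  have hgen : genE v u = d / 2 * lambdaMax M := rfl
  have hM : M.IsSymm := IsSymm.sub (transpose_vecMulVec _ _) hsymm
  have htr : M.trace = ‖v‖ ^ 2 := by
    rw [trace_sub, htrace, sub_zero, trace_vecMulVec, dotProduct_ofLp_self]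
  have hu : (u = of fun i j => v i * v j - ‖v‖ ^ 2 / d * (1 : Matrix (Fin d) (Fin d) ℝ) i j) ↔
      M = (‖v‖ ^ 2 / d) • 1 := by
    rw [sub_eq_iff_eq_add, ← sub_eq_iff_eq_add', eq_comm]
    constructor <;> (rintro rfl; ext i j; simp [vecMulVec])
  have hle := htr ▸ trace_le_mul_lambdaMax hM
  rw [hgen, hu, ← htr, ← mul_lambdaMax_eq_trace_iff hd hM, htr]
  refine ⟨by linarith, by constructor <;> intro <;> linarith, by nlinarith [sq_nonneg ‖v‖]⟩
end

section
/- The map (v,u) ↦ e(v/√|v|, u) (extended by the value e(0,u) at v = 0) is Lipschitz continuous on ℝ^d × S₀^d; i.e., there exists L > 0 such that |e(a/√|a|, u) − e(b/√|b|, w)| ≤ L(|a − b| + |u − w|) for all a, b ∈ ℝ^d and u, w ∈ S₀^d. -/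
open scoped BigOperators

/-- A fixed matrix norm: the Frobenius norm. -/
noncomputable def frobNorm {d : ℕ} (u : Matrix (Fin d) (Fin d) ℝ) : ℝ :=
  Real.sqrt (∑ i, ∑ j, (u i j) ^ 2)

/-!
`λ_max` is a supremum of the linear functionals `M ↦ xᵀ M x` over unit vectors, each bounded by
the Frobenius norm, so `λ_max` and hence `e` are Lipschitz in the matrix `v ⊗ v − u`. The
rescaling `v ↦ v/√|v|` turns `v ⊗ v` into `|v|⁻¹ v ⊗ v`, which is 3-Lipschitz in `v`: the
difference at `a` and at `b` splits into three rank-one matrices, each of Frobenius norm at most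
`|a − b|`.
-/

open Matrix
open scoped Matrix.Norms.Frobenius

section Frobenius

variable {m n : Type*} [Fintype m] [Fintype n]

lemma frobNorm_eq_norm {d : ℕ} (M : Matrix (Fin d) (Fin d) ℝ) : frobNorm M = ‖M‖ := by
  simp only [frobNorm, frobenius_norm_def, Real.sqrt_eq_rpow, Real.norm_eq_abs, Real.rpow_two,
    sq_abs]

lemma norm_apply_le_frobenius_norm {α : Type*} [SeminormedAddCommGroup α] (A : Matrix m n α)
    (i : m) (j : n) : ‖A i j‖ ≤ ‖A‖ :=
  calc ‖A i j‖ ≤ ‖WithLp.toLp 2 (A i)‖ := PiLp.norm_apply_le (WithLp.toLp 2 (A i)) j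
    _ ≤ ‖A‖ := PiLp.norm_apply_le (WithLp.toLp 2 fun i => WithLp.toLp 2 (A i)) i

lemma norm_vecMulVec_le (x : EuclideanSpace ℝ m) (y : EuclideanSpace ℝ n) :
    ‖vecMulVec x y‖ ≤ ‖x‖ * ‖y‖ := by
  rw [vecMulVec_eq (Fin 1)]
  calc _ ≤ ‖replicateCol (Fin 1) x.ofLp‖ * ‖replicateRow (Fin 1) y.ofLp‖ :=
        frobenius_norm_mul _ _
    _ = ‖x‖ * ‖y‖ :=
        congrArg₂ (· * ·) (frobenius_norm_replicateCol _) (frobenius_norm_replicateRow _)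

lemma abs_quadForm_le (M : Matrix n n ℝ) (x : EuclideanSpace ℝ n) :
    |∑ i, ∑ j, x i * M i j * x j| ≤ ‖M‖ * ‖x‖ ^ 2 := by
  have hQ : (replicateRow (Fin 1) x * M * replicateCol (Fin 1) x) 0 0
      = ∑ i, ∑ j, x i * M i j * x j := by
    simp only [mul_apply, replicateRow_apply, replicateCol_apply, Finset.sum_mul]
    exact Finset.sum_comm
  calc |∑ i, ∑ j, x i * M i j * x j|
      ≤ ‖replicateRow (Fin 1) x * M * replicateCol (Fin 1) x‖ := by
        rw [← hQ, ← Real.norm_eq_abs]; exact norm_apply_le_frobenius_norm _ 0 0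
    _ ≤ ‖replicateRow (Fin 1) x‖ * ‖M‖ * ‖replicateCol (Fin 1) x‖ :=
        (frobenius_norm_mul _ _).trans (by gcongr; exact frobenius_norm_mul _ _)
    _ = ‖x‖ * ‖M‖ * ‖x‖ :=
        congrArg₂ (· * ‖M‖ * ·) (frobenius_norm_replicateRow _) (frobenius_norm_replicateCol _)
    _ = ‖M‖ * ‖x‖ ^ 2 := by ring

end Frobenius

section LambdaMax

variable {d : ℕ}

lemma le_lambdaMax (M : Matrix (Fin d) (Fin d) ℝ) {x : EuclideanSpace ℝ (Fin d)} (hx : ‖x‖ = 1) :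
    ∑ i, ∑ j, x i * M i j * x j ≤ lambdaMax M := by
  refine le_csSup ⟨‖M‖, ?_⟩ ⟨x, hx, rfl⟩
  rintro r ⟨y, hy, rfl⟩
  simpa [hy] using (le_abs_self _).trans (abs_quadForm_le M y)

lemma lambdaMax_le (hd : 0 < d) {M : Matrix (Fin d) (Fin d) ℝ} {c : ℝ}
    (h : ∀ x : EuclideanSpace ℝ (Fin d), ‖x‖ = 1 → ∑ i, ∑ j, x i * M i j * x j ≤ c) :
    lambdaMax M ≤ c := by
  refine csSup_le ⟨_, EuclideanSpace.single ⟨0, hd⟩ 1, by simp, rfl⟩ ?_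
  rintro r ⟨x, hx, rfl⟩
  exact h x hx

lemma lambdaMax_le_add_norm_sub (hd : 0 < d) (M N : Matrix (Fin d) (Fin d) ℝ) :
    lambdaMax M ≤ lambdaMax N + ‖M - N‖ := by
  refine lambdaMax_le hd fun x hx => ?_
  have hsplit : ∑ i, ∑ j, x i * M i j * x j
      = ∑ i, ∑ j, x i * N i j * x j + ∑ i, ∑ j, x i * (M - N) i j * x j := by
    simp only [Matrix.sub_apply, mul_sub, sub_mul, Finset.sum_sub_distrib]
    ring
  have hdiff := (le_abs_self _).trans (abs_quadForm_le (M - N) x)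
  rw [hx, one_pow, mul_one] at hdiff
  linarith [le_lambdaMax N hx]

lemma abs_lambdaMax_sub_le (hd : 0 < d) (M N : Matrix (Fin d) (Fin d) ℝ) :
    |lambdaMax M - lambdaMax N| ≤ ‖M - N‖ :=
  abs_sub_le_iff.2 ⟨by linarith [lambdaMax_le_add_norm_sub hd M N],
    by linarith [lambdaMax_le_add_norm_sub hd N M, norm_sub_rev M N]⟩

lemma genE_eq (v : EuclideanSpace ℝ (Fin d)) (u : Matrix (Fin d) (Fin d) ℝ) :
    genE v u = d / 2 * lambdaMax (vecMulVec v v - u) :=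
  rfl

lemma abs_genE_sub_le (hd : 0 < d) (v v' : EuclideanSpace ℝ (Fin d))
    (u u' : Matrix (Fin d) (Fin d) ℝ) :
    |genE v u - genE v' u'| ≤ d / 2 * (‖vecMulVec v v - vecMulVec v' v'‖ + ‖u - u'‖) := by
  rw [genE_eq, genE_eq, ← mul_sub, abs_mul, abs_of_nonneg (by positivity)]
  gcongr
  calc _ ≤ ‖vecMulVec v v - u - (vecMulVec v' v' - u')‖ := abs_lambdaMax_sub_le hd _ _
    _ = ‖(vecMulVec v v - vecMulVec v' v') - (u - u')‖ := by congr 1; abel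
    _ ≤ _ := norm_sub_le _ _

end LambdaMax

section Rescaling

variable {n : Type*} [Fintype n]

lemma abs_inv_sub_inv_mul_mul_le (s t : ℝ) : |s⁻¹ - t⁻¹| * s * t ≤ |s - t| := by
  rcases eq_or_ne s 0 with rfl | hs
  · simp
  rcases eq_or_ne t 0 with rfl | ht
  · simp
  calc |s⁻¹ - t⁻¹| * s * t ≤ |s⁻¹ - t⁻¹| * |s * t| := by
        rw [mul_assoc]; exact mul_le_mul_of_nonneg_left (le_abs_self _) (abs_nonneg _)
    _ = |s - t| := by
        rw [← abs_mul, abs_sub_comm s t]; congr 1; field_simp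

lemma vecMulVec_inv_sqrt_norm_smul (a : EuclideanSpace ℝ n) :
    vecMulVec ⇑((√‖a‖)⁻¹ • a) ⇑((√‖a‖)⁻¹ • a) = ‖a‖⁻¹ • vecMulVec a a := by
  have hsq : (√‖a‖)⁻¹ * (√‖a‖)⁻¹ = ‖a‖⁻¹ := by
    rw [← mul_inv, Real.mul_self_sqrt (norm_nonneg a)]
  ext i j
  simp only [vecMulVec_apply, WithLp.ofLp_smul, Pi.smul_apply, Matrix.smul_apply, smul_eq_mul]
  linear_combination (a i * a j) * hsq

lemma norm_inv_norm_smul_vecMulVec_sub_le (a b : EuclideanSpace ℝ n) :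
    ‖‖a‖⁻¹ • vecMulVec a a - ‖b‖⁻¹ • vecMulVec b b‖ ≤ 3 * ‖a - b‖ := by
  have hdecomp : ‖a‖⁻¹ • vecMulVec a a - ‖b‖⁻¹ • vecMulVec b b
      = vecMulVec ⇑(‖a‖⁻¹ • a) ⇑(a - b) + (‖a‖⁻¹ - ‖b‖⁻¹) • vecMulVec a b
        + vecMulVec ⇑(a - b) ⇑(‖b‖⁻¹ • b) := by
    ext i j
    simp only [vecMulVec_apply, WithLp.ofLp_smul, WithLp.ofLp_sub, Pi.smul_apply, Pi.sub_apply,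
      Matrix.add_apply, Matrix.sub_apply, Matrix.smul_apply, smul_eq_mul]
    ring
  have hunit (c : EuclideanSpace ℝ n) : ‖‖c‖⁻¹ • c‖ ≤ 1 :=
    mem_closedBall_zero_iff.1 (inv_norm_smul_mem_unitClosedBall c)
  have h₁ : ‖vecMulVec ⇑(‖a‖⁻¹ • a) ⇑(a - b)‖ ≤ ‖a - b‖ :=
    (norm_vecMulVec_le _ _).trans (mul_le_of_le_one_left (norm_nonneg _) (hunit a))
  have h₂ : ‖(‖a‖⁻¹ - ‖b‖⁻¹) • vecMulVec a b‖ ≤ ‖a - b‖ := by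
    rw [norm_smul, Real.norm_eq_abs]
    calc _ ≤ |‖a‖⁻¹ - ‖b‖⁻¹| * (‖a‖ * ‖b‖) := by gcongr; exact norm_vecMulVec_le a b
      _ ≤ |‖a‖ - ‖b‖| := by rw [← mul_assoc]; exact abs_inv_sub_inv_mul_mul_le _ _
      _ ≤ ‖a - b‖ := abs_norm_sub_norm_le a b
  have h₃ : ‖vecMulVec ⇑(a - b) ⇑(‖b‖⁻¹ • b)‖ ≤ ‖a - b‖ :=
    (norm_vecMulVec_le _ _).trans (mul_le_of_le_one_right (norm_nonneg _) (hunit b))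
  rw [hdecomp]
  exact norm_add₃_le.trans (by linarith)

end Rescaling

/-- The map `(v,u) ↦ e(v/√|v|, u)` (extended by the value `e(0,u)` at `v = 0`, which is what
the formula `(√‖v‖)⁻¹ • v` gives, since in Lean `0⁻¹ = 0`) is Lipschitz continuous on
`ℝ^d × S₀^d`. -/
theorem genE_rescaled_lipschitz {d : ℕ} (hd : 0 < d) :
    ∃ L > (0 : ℝ), ∀ (a b : EuclideanSpace ℝ (Fin d)) (u w : Matrix (Fin d) (Fin d) ℝ),
      u.IsSymm → u.trace = 0 → w.IsSymm → w.trace = 0 →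
      |genE ((Real.sqrt ‖a‖)⁻¹ • a) u - genE ((Real.sqrt ‖b‖)⁻¹ • b) w| ≤
        L * (‖a - b‖ + frobNorm (u - w)) := by
  refine ⟨3 * d / 2, by positivity, fun a b u w _ _ _ _ => ?_⟩
  have hv := norm_inv_norm_smul_vecMulVec_sub_le a b
  rw [← vecMulVec_inv_sqrt_norm_smul, ← vecMulVec_inv_sqrt_norm_smul] at hv
  calc _ ≤ d / 2 * (3 * ‖a - b‖ + ‖u - w‖) := by
        grw [abs_genE_sub_le hd, hv]
    _ ≤ d / 2 * (3 * (‖a - b‖ + ‖u - w‖)) := by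
        gcongr; linarith [norm_nonneg (u - w)]
    _ = 3 * d / 2 * (‖a - b‖ + frobNorm (u - w)) := by
        rw [frobNorm_eq_norm]; ring
end

section
/- Let k ∈ ℤ^d with k ≠ 0 and let w ∈ ℂ^d satisfy k·w = 0. Define v̂(t) = e^{−|k|t} w ∈ ℂ^d and û_{ij}(t) = −i((k_j/|k|) v̂_i(t) + (k_i/|k|) v̂_j(t)) for t ∈ (0,∞). Then for every i = 1,…,d and every t > 0, (d/dt) v̂_i(t) + i Σ_{j=1}^d k_j û_{ij}(t) = 0; that is, (v̂, û, 0) solves the Fourier-space linear system ∂_t v̂_i + i Σ_j k_j û_{ij} + i k_i q̂ = 0, k·v̂ = 0 with q̂ = 0. -/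
open scoped BigOperators

/-- The Euclidean norm of `k ∈ ℤ^d ⊂ ℝ^d`. -/
noncomputable def znorm {d : ℕ} (k : Fin d → ℤ) : ℝ :=
  Real.sqrt (∑ i, ((k i : ℝ)) ^ 2)

/-- Let `k ∈ ℤ^d`, `k ≠ 0`, and `w ∈ ℂ^d` with `k·w = 0`. Define `v̂(t) = e^{−|k|t} w` and
`û_{ij}(t) = −i((k_j/|k|) v̂_i(t) + (k_i/|k|) v̂_j(t))`. Then for every `i` and `t > 0`,
`(d/dt) v̂_i(t) + i Σ_j k_j û_{ij}(t) + i k_i q̂ = 0` with `q̂ = 0`, and `k·v̂ = 0`;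
i.e. `(v̂, û, 0)` solves the Fourier-space linear system. -/
theorem fourier_subsolution_solves {d : ℕ} (k : Fin d → ℤ) (hk : k ≠ 0)
    (w : Fin d → ℂ) (hkw : ∑ i, (k i : ℂ) * w i = 0)
    (vhat : ℝ → Fin d → ℂ)
    (hv : ∀ t i, vhat t i = (Real.exp (-(znorm k) * t) : ℂ) * w i)
    (uhat : ℝ → Matrix (Fin d) (Fin d) ℂ)
    (hu : ∀ t i j, uhat t i j =
      -Complex.I * ((((k j : ℝ) / znorm k : ℝ) : ℂ) * vhat t i
        + (((k i : ℝ) / znorm k : ℝ) : ℂ) * vhat t j)) :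
    (∀ t : ℝ, 0 < t → ∀ i,
      deriv (fun s : ℝ => vhat s i) t + Complex.I * (∑ j, (k j : ℂ) * uhat t i j)
        + Complex.I * (k i : ℂ) * 0 = 0) ∧
    (∀ t : ℝ, ∑ i, (k i : ℂ) * vhat t i = 0) := by
  set n : ℝ := znorm k with hn
  have hsum_nonneg : 0 ≤ ∑ i, ((k i : ℝ)) ^ 2 := Finset.sum_nonneg fun i _ => sq_nonneg _
  have hn_sq : n ^ 2 = ∑ i, ((k i : ℝ)) ^ 2 := Real.sq_sqrt hsum_nonneg
  have hn_pos : 0 < n := by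
    rw [hn, znorm]
    apply Real.sqrt_pos.mpr
    obtain ⟨i, hi⟩ : ∃ i, k i ≠ 0 := by
      by_contra h
      push_neg at h
      exact hk (funext h)
    apply Finset.sum_pos' (fun j _ => sq_nonneg _)
    exact ⟨i, Finset.mem_univ i, by positivity⟩
  have hn_ne : (n : ℂ) ≠ 0 := by exact_mod_cast hn_pos.ne'
  constructor
  · intro t _ i
    have hderiv : HasDerivAt (fun s : ℝ => vhat s i)
        (((Real.exp (-n * t) * (-n) : ℝ) : ℂ) * w i) t := by
      have h1 : HasDerivAt (fun s : ℝ => Real.exp (-n * s)) (Real.exp (-n * t) * (-n)) t := by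
        simpa using ((hasDerivAt_id t).const_mul (-n)).exp
      have h2 := (h1.ofReal_comp).mul_const (w i)
      have heq : (fun s : ℝ => vhat s i) = fun s : ℝ => ((Real.exp (-n * s) : ℝ) : ℂ) * w i :=
        funext fun s => hv s i
      rw [heq]
      exact h2
    rw [hderiv.deriv]
    have hsum : Complex.I * (∑ j, (k j : ℂ) * uhat t i j)
        = ((n : ℝ) : ℂ) * ((Real.exp (-n * t) : ℝ) : ℂ) * w i := by
      have : ∀ j, (k j : ℂ) * uhat t i j =
          -Complex.I * ((((k j : ℝ)^2 / n : ℝ) : ℂ) * ((Real.exp (-n * t) : ℝ) : ℂ) * w i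
            + (((k i : ℝ) / n : ℝ) : ℂ) * ((Real.exp (-n * t) : ℝ) : ℂ) * ((k j : ℂ) * w j)) := by
        intro j
        rw [hu, hv, hv]
        push_cast
        ring
      rw [Finset.sum_congr rfl fun j _ => this j, ← Finset.mul_sum]
      rw [Finset.sum_add_distrib, ← Finset.sum_mul, ← Finset.sum_mul, ← Finset.mul_sum,
        hkw, mul_zero, add_zero]
      have hs : ∑ j, (((k j : ℝ)^2 / n : ℝ) : ℂ) = ((n : ℝ) : ℂ) := by
        rw [← Complex.ofReal_sum]
        exact Complex.ofReal_inj.mpr (by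
          rw [← Finset.sum_div, ← hn_sq, sq, mul_div_assoc, div_self hn_pos.ne', mul_one])
      rw [hs]
      have : Complex.I * -Complex.I = 1 := by
        rw [mul_neg, Complex.I_mul_I]; ring
      calc Complex.I * (-Complex.I * (((n:ℝ):ℂ) * ((Real.exp (-n*t) : ℝ):ℂ) * w i))
          = (Complex.I * -Complex.I) * (((n:ℝ):ℂ) * ((Real.exp (-n*t) : ℝ):ℂ) * w i) := by ring
        _ = _ := by rw [this, one_mul]
    rw [hsum]
    push_cast
    ring
  · intro t
    have : ∑ i, (k i : ℂ) * vhat t i = ((Real.exp (-n * t) : ℝ) : ℂ) * ∑ i, (k i : ℂ) * w i := by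
      rw [Finset.mul_sum]
      exact Finset.sum_congr rfl fun i _ => by rw [hv]; ring
    rw [this, hkw, mul_zero]
end
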